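/- Let X be a compact metric space, A ⊆ X a nonempty closed set, n ∈ ℕ, and C, c, C₀, ε > 0 constants. Suppose S_m : X → ℝ (m ∈ ℕ) are nonnegative functions such that: (i) S_m(x) ≤ C m^n for all x ∈ X and all m; (ii) |S_m(x) − S_m(y)| ≤ C m^{n+1/2} d(x,y) for all x, y ∈ X and all m; (iii) for all sufficiently large m, S_m(x) ≥ c m^n whenever d(x, A) ≥ C₀/√m; (iv) for all sufficiently large m, S_m(a) ≥ c m^n for every a ∈ A. Then there exist k ∈ ℕ, c' > 0, and m₀ such that for all m ≥ m₀ and all x ∈ X, c' m^n ≤ S_m(x) + S_{km}(x) ≤ 2C k^n m^n. -/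
import Mathlib


theorem two_stratum_uniform_bound {X : Type*} [MetricSpace X] [CompactSpace X]
    (A : Set X) (hA : A.Nonempty) (hAclosed : IsClosed A)
    (n : ℕ) (C c C₀ ε : ℝ) (hC : 0 < C) (hc : 0 < c) (hC₀ : 0 < C₀) (hε : 0 < ε)
    (S : ℕ → X → ℝ) (hSnonneg : ∀ m x, 0 ≤ S m x)
    (hupper : ∀ m : ℕ, ∀ x : X, S m x ≤ C * (m : ℝ) ^ n)
    (hlip : ∀ m : ℕ, ∀ x y : X,
      |S m x - S m y| ≤ C * (m : ℝ) ^ ((n : ℝ) + 1 / 2) * dist x y)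
    (hfar : ∃ M₁ : ℕ, ∀ m ≥ M₁, ∀ x : X,
      C₀ / Real.sqrt m ≤ Metric.infDist x A → c * (m : ℝ) ^ n ≤ S m x)
    (honA : ∃ M₂ : ℕ, ∀ m ≥ M₂, ∀ a ∈ A, c * (m : ℝ) ^ n ≤ S m a) :
    ∃ (k : ℕ) (c' : ℝ) (m₀ : ℕ), 0 < k ∧ 0 < c' ∧
      ∀ m ≥ m₀, ∀ x : X,
        c' * (m : ℝ) ^ n ≤ S m x + S (k * m) x ∧
          S m x + S (k * m) x ≤ 2 * C * (k : ℝ) ^ n * (m : ℝ) ^ n := by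
  obtain ⟨M₁, hM₁⟩ := hfar
  obtain ⟨M₂, hM₂⟩ := honA
  set k : ℕ := max 1 ⌈(2 * C * C₀ / c) ^ 2⌉₊ with hk
  have hk1 : 1 ≤ k := le_max_left _ _
  have hkpos : 0 < k := hk1
  have hkR : (0:ℝ) < k := by exact_mod_cast hkpos
  have hkbig : (2 * C * C₀ / c) ^ 2 ≤ (k : ℝ) := by
    calc (2 * C * C₀ / c) ^ 2 ≤ (⌈(2 * C * C₀ / c) ^ 2⌉₊ : ℝ) := Nat.le_ceil _
    _ ≤ (k : ℝ) := by exact_mod_cast le_max_right 1 _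
  have hsqrtk : 2 * C * C₀ / c ≤ Real.sqrt k := by
    have := Real.sqrt_le_sqrt hkbig
    rwa [Real.sqrt_sq (by positivity)] at this
  -- hence C * C₀ / √k ≤ c / 2
  have hsqrtk_pos : (0:ℝ) < Real.sqrt k := Real.sqrt_pos.mpr hkR
  have hkey : C * C₀ / Real.sqrt k ≤ c / 2 := by
    rw [div_le_div_iff₀ hsqrtk_pos (by norm_num)]
    have h2 : 2 * C * C₀ ≤ Real.sqrt k * c := (div_le_iff₀ hc).mp hsqrtk
    linarith
  refine ⟨k, c / 2, max (max M₁ M₂) 1, hkpos, by positivity, ?_⟩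
  intro m hm x
  have hmM₁ : M₁ ≤ m := le_trans (le_max_left _ _) (le_trans (le_max_left _ _) hm)
  have hmM₂ : M₂ ≤ m := le_trans (le_max_right _ _) (le_trans (le_max_left _ _) hm)
  have hm1 : 1 ≤ m := le_trans (le_max_right _ _) hm
  have hmR : (0:ℝ) < m := by exact_mod_cast hm1
  have hkm : M₁ ≤ k * m := le_trans hmM₁ (Nat.le_mul_of_pos_left m hkpos)
  have hmn_pos : (0:ℝ) < (m:ℝ) ^ n := by positivity
  have hmlekm : (m:ℝ) ^ n ≤ ((k * m : ℕ):ℝ) ^ n := by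
    apply pow_le_pow_left₀ hmR.le
    exact_mod_cast Nat.le_mul_of_pos_left m hkpos
  constructor
  · -- lower bound
    rcases le_or_gt (C₀ / Real.sqrt ((k * m : ℕ) : ℝ)) (Metric.infDist x A) with hfarx | hnear
    · -- far case: use S (k*m)
      have h1 : c * ((k * m : ℕ):ℝ) ^ n ≤ S (k * m) x := hM₁ (k * m) hkm x hfarx
      have : c / 2 * (m:ℝ) ^ n ≤ c * ((k * m : ℕ):ℝ) ^ n := by
        have := mul_le_mul_of_nonneg_left hmlekm hc.le
        nlinarith
      linarith [hSnonneg m x]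
    · -- near case
      have hAcomp : IsCompact A := hAclosed.isCompact
      obtain ⟨a, haA, hdist⟩ := hAcomp.exists_infDist_eq_dist hA x
      have honAm : c * (m:ℝ) ^ n ≤ S m a := hM₂ m hmM₂ a haA
      have hlipm := hlip m x a
      have hda : dist x a ≤ C₀ / Real.sqrt ((k * m : ℕ) : ℝ) := by
        rw [← hdist]; exact hnear.le
      -- compute the rpow
      have hrpow : (m:ℝ) ^ ((n:ℝ) + 1 / 2) = (m:ℝ) ^ n * Real.sqrt m := by
        rw [Real.rpow_add hmR, Real.rpow_natCast, Real.sqrt_eq_rpow]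
      have hsqrtm_pos : (0:ℝ) < Real.sqrt m := Real.sqrt_pos.mpr hmR
      have hsqrtkm : Real.sqrt ((k * m : ℕ):ℝ) = Real.sqrt k * Real.sqrt m := by
        push_cast
        exact Real.sqrt_mul hkR.le _
      have herr : C * (m:ℝ) ^ ((n:ℝ) + 1 / 2) * dist x a ≤ c / 2 * (m:ℝ) ^ n := by
        calc C * (m:ℝ) ^ ((n:ℝ) + 1 / 2) * dist x a
            ≤ C * (m:ℝ) ^ ((n:ℝ) + 1 / 2) * (C₀ / Real.sqrt ((k * m : ℕ) : ℝ)) := by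
              apply mul_le_mul_of_nonneg_left hda
              have : (0:ℝ) ≤ (m:ℝ) ^ ((n:ℝ) + 1 / 2) := Real.rpow_nonneg hmR.le _
              positivity
          _ = (C * C₀ / Real.sqrt k) * (m:ℝ) ^ n := by
              rw [hrpow, hsqrtkm]
              field_simp
          _ ≤ c / 2 * (m:ℝ) ^ n := mul_le_mul_of_nonneg_right hkey hmn_pos.le
      have habs : S m a - S m x ≤ C * (m:ℝ) ^ ((n:ℝ) + 1 / 2) * dist x a := by
        have := abs_le.mp hlipm
        linarith [this.1]
      have : c / 2 * (m:ℝ) ^ n ≤ S m x := by nlinarith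
      linarith [hSnonneg (k * m) x]
  · -- upper bound
    have h1 := hupper m x
    have h2 := hupper (k * m) x
    have hkmcast : ((k * m : ℕ):ℝ) ^ n = (k:ℝ) ^ n * (m:ℝ) ^ n := by
      push_cast; rw [mul_pow]
    have hkn1 : (1:ℝ) ≤ (k:ℝ) ^ n := one_le_pow₀ (by exact_mod_cast hk1)
    nlinarith [hmn_pos]
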